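/- Let k be a field and let K ⊆ K' be algebraic function fields over k such that K' is a finite (module-finite) and separable field extension of K. Then scvg_k(K) ≤ scvg_k(K'). -/
import Mathlib


universe u v

/-- `K` is an algebraic function field over `k`, i.e. a finitely generated field extension. -/
def IsAlgFunctionField (k : Type u) (K : Type v) [Field k] [Field K] [Algebra k K] : Prop :=
  (⊤ : IntermediateField k K).FG

/-- There is a covering diagram for `K/k` of degree `e`: algebraic function fields `K_B`, `K_C`
over `k`, a `k`-algebra embedding `K ↪ K_C` which is module-finite, and a `k`-algebra
embedding `K_B(t) ↪ K_C` with `[K_C : K_B(t)] = e`. -/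
def HasCvgDiagram (k : Type u) (K : Type v) [Field k] [Field K] [Algebra k K] (e : ℕ) : Prop :=
  ∃ (K_B K_C : Type (max u v)) (_ : Field K_B) (_ : Field K_C)
    (_ : Algebra k K_B) (_ : Algebra k K_C),
    IsAlgFunctionField k K_B ∧ IsAlgFunctionField k K_C ∧
    ∃ (f : K →ₐ[k] K_C) (π : RatFunc K_B →ₐ[k] K_C),
      f.toRingHom.Finite ∧
      (letI := π.toRingHom.toAlgebra
       Module.finrank (RatFunc K_B) K_C = e)

/-- A covering diagram with `K_C/K` moreover separable. -/
def HasSepCvgDiagram (k : Type u) (K : Type v) [Field k] [Field K] [Algebra k K] (e : ℕ) :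
    Prop :=
  ∃ (K_B K_C : Type (max u v)) (_ : Field K_B) (_ : Field K_C)
    (_ : Algebra k K_B) (_ : Algebra k K_C),
    IsAlgFunctionField k K_B ∧ IsAlgFunctionField k K_C ∧
    ∃ (f : K →ₐ[k] K_C) (π : RatFunc K_B →ₐ[k] K_C),
      f.toRingHom.Finite ∧
      (letI := f.toRingHom.toAlgebra
       Algebra.IsSeparable K K_C) ∧
      (letI := π.toRingHom.toAlgebra
       Module.finrank (RatFunc K_B) K_C = e)

/-- The covering gonality of `K` over `k`. -/
noncomputable def cvg (k : Type u) (K : Type v) [Field k] [Field K] [Algebra k K] : ℕ :=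
  sInf {e : ℕ | 0 < e ∧ HasCvgDiagram k K e}

/-- The separable covering gonality of `K` over `k`. -/
noncomputable def scvg (k : Type u) (K : Type v) [Field k] [Field K] [Algebra k K] : ℕ :=
  sInf {e : ℕ | 0 < e ∧ HasSepCvgDiagram k K e}

theorem IsAlgFunctionField.of_module_finite (k E L : Type*) [Field k] [Field E] [Field L]
    [Algebra k E] [Algebra k L] [Algebra E L] [IsScalarTower k E L] [Module.Finite E L]
    (hE : IsAlgFunctionField k E) : IsAlgFunctionField k L := by
  classical
  obtain ⟨s, hs⟩ := hE
  obtain ⟨T, hT⟩ := Module.Finite.fg_top (R := E) (M := L)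
  refine ⟨s.image (algebraMap E L) ∪ T, ?_⟩
  rw [eq_top_iff]
  intro x _
  set F := IntermediateField.adjoin k (↑(s.image (algebraMap E L) ∪ T) : Set L) with hF
  have hmap : ∀ c : E, algebraMap E L c ∈ F := by
    intro c
    have hc : c ∈ (⊤ : IntermediateField k E) := trivial
    rw [← hs] at hc
    have hmem : algebraMap E L c ∈
        (IntermediateField.adjoin k (↑s : Set E)).map (IsScalarTower.toAlgHom k E L) :=
      ⟨c, hc, rfl⟩
    rw [IntermediateField.adjoin_map] at hmem
    refine IntermediateField.adjoin.mono k _ _ ?_ hmem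
    rintro y ⟨c', hc', rfl⟩
    simp only [Finset.coe_union, Finset.coe_image, Set.mem_union]
    exact Or.inl ⟨c', hc', rfl⟩
  have hx : x ∈ Submodule.span E (T : Set L) := by rw [hT]; trivial
  refine Submodule.span_induction ?_ ?_ ?_ ?_ hx
  · intro y hy
    refine IntermediateField.subset_adjoin _ _ ?_
    simp only [Finset.coe_union, Set.mem_union]
    exact Or.inr hy
  · exact zero_mem F
  · intro y z _ _ hy hz; exact add_mem hy hz
  · intro c y _ hy; rw [Algebra.smul_def]; exact mul_mem (hmap c) hy


theorem hasSep_down (k : Type u) (K K' : Type v) [Field k] [Field K] [Field K']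
    [Algebra k K] [Algebra k K'] [Algebra K K'] [IsScalarTower k K K'] [Module.Finite K K']
    [Algebra.IsSeparable K K'] {e : ℕ} (h : HasSepCvgDiagram k K' e) :
    HasSepCvgDiagram k K e := by
  obtain ⟨K_B, K_C, _, _, _, _, hB, hC, f, π, hfin, hsep, hdeg⟩ := h
  refine ⟨K_B, K_C, _, _, _, _, hB, hC, f.comp (IsScalarTower.toAlgHom k K K'), π, ?_, ?_, hdeg⟩
  · letI : Algebra K' K_C := f.toRingHom.toAlgebra
    letI : Algebra K K_C := ((f.comp (IsScalarTower.toAlgHom k K K')).toRingHom).toAlgebra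
    haveI : IsScalarTower K K' K_C := IsScalarTower.of_algebraMap_eq fun x => rfl
    haveI : Module.Finite K' K_C := hfin
    exact Module.Finite.trans K' K_C
  · letI : Algebra K' K_C := f.toRingHom.toAlgebra
    letI : Algebra K K_C := ((f.comp (IsScalarTower.toAlgHom k K K')).toRingHom).toAlgebra
    haveI : IsScalarTower K K' K_C := IsScalarTower.of_algebraMap_eq fun x => rfl
    haveI : Algebra.IsSeparable K' K_C := hsep
    exact Algebra.IsSeparable.trans K K' K_C


theorem hasSep_up (k : Type u) (K K' : Type v) [Field k] [Field K] [Field K']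
    [Algebra k K] [Algebra k K'] [Algebra K K'] [IsScalarTower k K K'] [Module.Finite K K']
    [Algebra.IsSeparable K K'] {e : ℕ} (he : 0 < e) (h : HasSepCvgDiagram k K e) :
    ∃ e', 0 < e' ∧ HasSepCvgDiagram k K' e' := by
  obtain ⟨K_B, K_C, _, _, _, _, hB, hC, f, π, hfin, hsep, hdeg⟩ := h
  letI : Algebra K K_C := f.toRingHom.toAlgebra
  haveI : IsScalarTower k K K_C := IsScalarTower.of_algebraMap_eq fun x => (f.commutes x).symm
  haveI hsepKC : Algebra.IsSeparable K K_C := hsep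
  haveI hfinKC : Module.Finite K K_C := hfin
  -- primitive element
  let pb : PowerBasis K K' := Field.powerBasisOfFiniteOfSeparable K K'
  set p : Polynomial K := minpoly K pb.gen with hp
  have hint : IsIntegral K pb.gen := Algebra.IsIntegral.isIntegral pb.gen
  have hp0 : p ≠ 0 := minpoly.ne_zero hint
  have hpsep : p.Separable := Algebra.IsSeparable.isSeparable K pb.gen
  set q : Polynomial K_C := p.map (algebraMap K K_C) with hq
  have hq0 : q ≠ 0 := Polynomial.map_ne_zero hp0
  have hqdeg : 0 < q.natDegree := by
    rw [hq, Polynomial.natDegree_map]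
    exact minpoly.natDegree_pos hint
  obtain ⟨g, hgirr, hgdvd⟩ := WfDvdMonoid.exists_irreducible_factor
    (Polynomial.not_isUnit_of_natDegree_pos q hqdeg) hq0
  haveI : Fact (Irreducible g) := ⟨hgirr⟩
  let L := AdjoinRoot g
  -- root
  have hroot : Polynomial.aeval (AdjoinRoot.root g) p = 0 := by
    rw [← Polynomial.aeval_map_algebraMap K_C (AdjoinRoot.root g) p, ← hq,
      AdjoinRoot.aeval_eq, AdjoinRoot.mk_eq_zero]
    exact hgdvd
  let φ : K' →ₐ[K] L := pb.lift (AdjoinRoot.root g) hroot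
  letI : Algebra K' L := φ.toRingHom.toAlgebra
  haveI : IsScalarTower K K' L := IsScalarTower.of_algebraMap_eq fun x => (φ.commutes x).symm
  -- finiteness
  haveI hLKC : Module.Finite K_C L := (AdjoinRoot.powerBasis hgirr.ne_zero).finite
  haveI : Module.Finite K L := Module.Finite.trans K_C L
  haveI hK'L : Module.Finite K' L := Module.Finite.of_restrictScalars_finite K K' L
  -- separability
  have hgsep : g.Separable := (hpsep.map).of_dvd hgdvd
  have hrootsep : IsSeparable K_C (AdjoinRoot.root g) :=
    hgsep.of_dvd (minpoly.dvd K_C _ (by rw [AdjoinRoot.aeval_eq]; exact AdjoinRoot.mk_self))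
  haveI : Algebra.IsSeparable K_C L := by
    haveI := (IntermediateField.isSeparable_adjoin_simple_iff_isSeparable K_C L).2 hrootsep
    exact Algebra.IsSeparable.of_algHom _ _
      ((IntermediateField.equivOfEq (IntermediateField.adjoin_root_eq_top g)).trans
        IntermediateField.topEquiv).symm.toAlgHom
  haveI : Algebra.IsSeparable K L := Algebra.IsSeparable.trans K K_C L
  haveI hsepK'L : Algebra.IsSeparable K' L := Algebra.isSeparable_tower_top_of_isSeparable K K' L
  -- the k-algebra hom K' → L
  let f' : K' →ₐ[k] L :=
    { toRingHom := φ.toRingHom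
      commutes' := fun x => by
        show φ (algebraMap k K' x) = algebraMap k L x
        rw [IsScalarTower.algebraMap_apply k K K', φ.commutes,
          ← IsScalarTower.algebraMap_apply k K L] }
  -- π'
  let π' : RatFunc K_B →ₐ[k] L := (IsScalarTower.toAlgHom k K_C L).comp π
  letI : Algebra (RatFunc K_B) K_C := π.toRingHom.toAlgebra
  haveI : Module.Finite (RatFunc K_B) K_C :=
    Module.finite_of_finrank_pos (by rw [hdeg]; exact he)
  haveI : Module.Finite (RatFunc K_B) L := Module.Finite.trans K_C L
  have halg : π'.toRingHom.toAlgebra = (inferInstance : Algebra (RatFunc K_B) L) :=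
    Algebra.algebra_ext _ _ fun r => rfl
  have hfr : (letI := π'.toRingHom.toAlgebra
      Module.finrank (RatFunc K_B) L) = Module.finrank (RatFunc K_B) L := by
    rw [halg]
  refine ⟨Module.finrank (RatFunc K_B) L, Module.finrank_pos,
    K_B, L, _, _, _, _, hB, ?_, f', π', hK'L, hsepK'L, hfr⟩
  exact IsAlgFunctionField.of_module_finite k K_C L hC


/-- If `K ⊆ K'` are algebraic function fields over `k` with `K'` module-finite and separable
over `K`, then `scvg_k(K) ≤ scvg_k(K')`. -/
theorem stmt13 (k : Type u) (K K' : Type v) [Field k] [Field K] [Field K']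
    [Algebra k K] [Algebra k K'] [Algebra K K'] [IsScalarTower k K K'] [Module.Finite K K']
    [Algebra.IsSeparable K K']
    (hK : IsAlgFunctionField k K) (hK' : IsAlgFunctionField k K') :
    scvg k K ≤ scvg k K' := by
  by_cases h : {e : ℕ | 0 < e ∧ HasSepCvgDiagram k K' e}.Nonempty
  · have hmem := Nat.sInf_mem h
    exact Nat.sInf_le ⟨hmem.1, hasSep_down k K K' hmem.2⟩
  · rw [Set.not_nonempty_iff_eq_empty] at h
    have hempty : {e : ℕ | 0 < e ∧ HasSepCvgDiagram k K e} = ∅ := by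
      rw [Set.eq_empty_iff_forall_notMem]
      rintro e ⟨he, hd⟩
      obtain ⟨e', he', hd'⟩ := hasSep_up k K K' he hd
      have : e' ∈ {e : ℕ | 0 < e ∧ HasSepCvgDiagram k K' e} := ⟨he', hd'⟩
      rw [h] at this
      exact this
    unfold scvg
    rw [hempty, h]
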